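/- arXiv:1208.5213 — 3 statements merged into one kernel-verified Lean document; each statement's English description precedes it below -/
import Mathlib

section
/- The sequence {|B_{2n}|}_{n≥1} of absolute values of the even-indexed Bernoulli numbers is log-convex: for every integer n ≥ 2, |B_{2n}|² ≤ |B_{2n−2}|·|B_{2n+2}|. -/
/-!
By Euler's formula, `|B_{2k}| = 2 · (2k)! / (2π)^{2k} · ζ(2k)`, a product of three log-convex
sequences in `k`: the constant `2`, `(2k)! / (2π)^{2k}` (the power of `2π` contributes equality,
and `(2k+2)!² ≤ (2k)! (2k+4)!`), and `ζ(2k) = ∑ j^{-2k}`, which is log-convex by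
Cauchy–Schwarz applied to `j^{-k}` and `j^{-(k+2)}`. Products of
log-convex sequences are log-convex.
-/

open Real
open scoped Nat

theorem Nat.sq_factorial_add_le (n k : ℕ) : (n + k)! ^ 2 ≤ n ! * (n + 2 * k)! := by
  have hlow := Nat.factorial_mul_ascFactorial n k
  have hhigh := Nat.factorial_mul_ascFactorial (n + k) k
  calc (n + k)! ^ 2 = n ! * ((n + 1).ascFactorial k * (n + k)!) := by
        rw [sq]; nth_rw 1 [← hlow]; ring
    _ ≤ n ! * ((n + k + 1).ascFactorial k * (n + k)!) := by
        gcongr; omega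
    _ = n ! * (n + 2 * k)! := by
        rw [two_mul, ← add_assoc, ← hhigh, mul_comm (Nat.ascFactorial _ _)]

theorem tsum_mul_sq_le_sq_mul_sq {ι : Type*} {f g : ι → ℝ}
    (hf : ∀ i, 0 ≤ f i) (hg : ∀ i, 0 ≤ g i)
    (hf2 : Summable fun i ↦ f i ^ 2) (hg2 : Summable fun i ↦ g i ^ 2) :
    (∑' i, f i * g i) ^ 2 ≤ (∑' i, f i ^ 2) * ∑' i, g i ^ 2 := by
  have hfg : Summable fun i ↦ f i * g i :=
    Summable.of_nonneg_of_le (fun i ↦ mul_nonneg (hf i) (hg i))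
      (fun i ↦ by nlinarith [sq_nonneg (f i - g i)]) (hf2.add hg2)
  have hA : 0 ≤ ∑' i, f i ^ 2 := tsum_nonneg fun i ↦ sq_nonneg _
  have hB : 0 ≤ ∑' i, g i ^ 2 := tsum_nonneg fun i ↦ sq_nonneg _
  have hle : ∑' i, f i * g i ≤ √((∑' i, f i ^ 2) * ∑' i, g i ^ 2) := by
    refine hfg.tsum_le_of_sum_le fun s ↦ le_sqrt_of_sq_le ?_
    calc (∑ i ∈ s, f i * g i) ^ 2 ≤ (∑ i ∈ s, f i ^ 2) * ∑ i ∈ s, g i ^ 2 :=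
          Finset.sum_mul_sq_le_sq_mul_sq s f g
      _ ≤ (∑' i, f i ^ 2) * ∑' i, g i ^ 2 :=
          mul_le_mul (hf2.sum_le_tsum s fun i _ ↦ sq_nonneg _)
            (hg2.sum_le_tsum s fun i _ ↦ sq_nonneg _)
            (Finset.sum_nonneg fun i _ ↦ sq_nonneg _) hA
  calc (∑' i, f i * g i) ^ 2 ≤ √((∑' i, f i ^ 2) * ∑' i, g i ^ 2) ^ 2 :=
        pow_le_pow_left₀ (tsum_nonneg fun i ↦ mul_nonneg (hf i) (hg i)) hle 2
    _ = _ := sq_sqrt (mul_nonneg hA hB)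

theorem tsum_one_div_nat_pow_add_sq_le {a b : ℕ} (ha : 1 ≤ a) (hb : 1 ≤ b) :
    (∑' j : ℕ, 1 / (j : ℝ) ^ (a + b)) ^ 2 ≤
      (∑' j : ℕ, 1 / (j : ℝ) ^ (2 * a)) * ∑' j : ℕ, 1 / (j : ℝ) ^ (2 * b) := by
  have hsq (c : ℕ) :
      (fun j : ℕ ↦ (1 / (j : ℝ) ^ c) ^ 2) = fun j : ℕ ↦ 1 / (j : ℝ) ^ (2 * c) := by
    ext j; rw [div_pow, one_pow, ← pow_mul, mul_comm]
  have hsummable {c : ℕ} (hc : 1 ≤ c) : Summable fun j : ℕ ↦ (1 / (j : ℝ) ^ c) ^ 2 := by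
    rw [hsq]; exact summable_one_div_nat_pow.mpr (by omega)
  have := tsum_mul_sq_le_sq_mul_sq (fun j ↦ by positivity) (fun j ↦ by positivity)
    (hsummable ha) (hsummable hb)
  simpa only [hsq, ← one_div_mul_one_div, pow_add] using this

theorem sq_mul_le_mul_mul {a b c x y z : ℝ} (hb : b ^ 2 ≤ a * c) (hy : y ^ 2 ≤ x * z) :
    (b * y) ^ 2 ≤ (a * x) * (c * z) := by
  rw [mul_pow, mul_mul_mul_comm]
  exact mul_le_mul hb hy (sq_nonneg y) ((sq_nonneg b).trans hb)

theorem abs_bernoulli_two_mul {k : ℕ} (hk : k ≠ 0) :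
    |(bernoulli (2 * k) : ℝ)| =
      2 * ((2 * k)! / (2 * π) ^ (2 * k)) * ∑' j : ℕ, 1 / (j : ℝ) ^ (2 * k) := by
  have hzeta := (hasSum_zeta_nat hk).tsum_eq
  -- The sign of `B_{2k}` is read off from the positivity of `ζ(2k)`.
  have hc : 0 < (2 : ℝ) ^ (2 * k - 1) * π ^ (2 * k) / (2 * k)! := by positivity
  have hsign : 0 ≤ (-1) ^ (k + 1) * (bernoulli (2 * k) : ℝ) := by
    refine nonneg_of_mul_nonneg_left ?_ hc
    calc 0 ≤ ∑' j : ℕ, 1 / (j : ℝ) ^ (2 * k) := tsum_nonneg fun j ↦ by positivity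
      _ = _ := by rw [hzeta]; ring
  have habs : |(bernoulli (2 * k) : ℝ)| = (-1) ^ (k + 1) * bernoulli (2 * k) := by
    rw [← abs_of_nonneg hsign, abs_mul, abs_pow, abs_neg, abs_one, one_pow, one_mul]
  rw [hzeta, habs, mul_pow, ← mul_pow_sub_one (by omega : 2 * k ≠ 0) (2 : ℝ)]
  field_simp

theorem sq_factorial_div_pow_le (n k : ℕ) (x : ℝ) :
    ((n + k)! / x ^ (n + k)) ^ 2 ≤ (n ! / x ^ n) * ((n + 2 * k)! / x ^ (n + 2 * k)) := by
  have hpow : (x ^ (n + k)) ^ 2 = x ^ n * x ^ (n + 2 * k) := by ring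
  rw [div_pow, div_mul_div_comm, ← hpow]
  gcongr
  exact_mod_cast Nat.sq_factorial_add_le n k

/-- The sequence `{|B_{2n}|}_{n ≥ 1}` is log-convex, where `B_n` is the
`n`-th Bernoulli number. -/
theorem abs_bernoulli_logConvex (n : ℕ) (hn : 2 ≤ n) :
    |(bernoulli (2 * n) : ℝ)| ^ 2 ≤
      |(bernoulli (2 * n - 2) : ℝ)| * |(bernoulli (2 * n + 2) : ℝ)| := by
  obtain ⟨k, rfl⟩ : ∃ k, n = k + 1 := ⟨n - 1, by omega⟩
  have hk : 1 ≤ k := by omega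
  have hfactorial := sq_factorial_div_pow_le (2 * k) 2 (2 * π)
  have hzeta := tsum_one_div_nat_pow_add_sq_le hk (show 1 ≤ k + 2 by omega)
  rw [show 2 * k + 2 = 2 * (k + 1) by ring, show 2 * k + 2 * 2 = 2 * (k + 2) by ring] at hfactorial
  rw [show k + (k + 2) = 2 * (k + 1) by ring] at hzeta
  rw [show 2 * (k + 1) - 2 = 2 * k by omega, show 2 * (k + 1) + 2 = 2 * (k + 2) by ring,
    abs_bernoulli_two_mul (by omega : k ≠ 0), abs_bernoulli_two_mul k.succ_ne_zero,
    abs_bernoulli_two_mul (by omega : k + 2 ≠ 0)]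
  exact sq_mul_le_mul_mul (sq_mul_le_mul_mul (by norm_num) hfactorial) hzeta
end

section
/- The function x ↦ log B(x)^{1/x} = (log B(x))/x is strictly increasing for x ≥ 1, where B(x) = (1/e)·∑_{k≥0} k^x/k!; that is, for all real numbers 1 ≤ x < y one has B(x)^{1/x} < B(y)^{1/y}. -/
/-!
Hölder's inequality, applied term by term to the Dobinski series, makes `log B` convex on
`(0, ∞)`. Since `log B 1 = 0` and `log B y > 0` for `y > 1`, convexity between `1` and `y` gives
`log B x ≤ θ log B y` with `θ = (x - 1)/(y - 1) < x / y`, hence `log B x / x < log B y / y`.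
-/

/-- The Bell function, defined for real `x > 0` by Dobinski-type series
`B(x) = (1/e) ∑_{k ≥ 0} k^x / k!` (the `k = 0` term vanishes). -/
noncomputable def bellFun (x : ℝ) : ℝ :=
  (1 / Real.exp 1) * ∑' k : ℕ, (k : ℝ) ^ x / (Nat.factorial k : ℝ)

open Real Set

theorem tsum_rpow_mul_rpow_le_of_nonneg {ι : Type*} {f g : ι → ℝ} (hf : ∀ i, 0 ≤ f i)
    (hg : ∀ i, 0 ≤ g i) (hf_sum : Summable f) (hg_sum : Summable g) {a b : ℝ} (ha : 0 < a)
    (hb : 0 < b) (hab : a + b = 1) :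
    ∑' i, f i ^ a * g i ^ b ≤ (∑' i, f i) ^ a * (∑' i, g i) ^ b := by
  have hpow {c : ℝ} (hc : 0 < c) {u : ι → ℝ} (hu : ∀ i, 0 ≤ u i) :
      (fun i => (u i ^ c) ^ c⁻¹) = u :=
    funext fun i => rpow_rpow_inv (hu i) hc.ne'
  have := inner_le_Lp_mul_Lq_tsum_of_nonneg (Real.HolderConjugate.inv_inv ha hb hab)
    (fun i => rpow_nonneg (hf i) a) (fun i => rpow_nonneg (hg i) b)
    (by rwa [hpow ha hf]) (by rwa [hpow hb hg])
  simpa only [hpow ha hf, hpow hb hg, one_div, inv_inv] using this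

theorem natCast_rpow_le_two_rpow_abs_pow (x : ℝ) (k : ℕ) : (k : ℝ) ^ x ≤ (2 ^ |x|) ^ k := by
  rcases k.eq_zero_or_pos with rfl | hk
  · simpa using zero_rpow_le_one x
  calc (k : ℝ) ^ x ≤ (k : ℝ) ^ |x| :=
        rpow_le_rpow_of_exponent_le (by exact_mod_cast hk) (le_abs_self x)
    _ ≤ ((2 : ℝ) ^ k) ^ |x| :=
        rpow_le_rpow k.cast_nonneg (by exact_mod_cast k.lt_two_pow_self.le) (abs_nonneg x)
    _ = (2 ^ |x|) ^ k := by
        rw [← rpow_natCast, ← rpow_natCast, ← rpow_mul zero_le_two, ← rpow_mul zero_le_two,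
          mul_comm]

theorem summable_rpow_div_factorial (x : ℝ) :
    Summable fun k : ℕ => (k : ℝ) ^ x / k.factorial :=
  (summable_pow_div_factorial (2 ^ |x|)).of_nonneg_of_le (fun _ => by positivity)
    fun k =>
      div_le_div_of_nonneg_right (natCast_rpow_le_two_rpow_abs_pow x k) k.factorial.cast_nonneg

theorem hasSum_rpow_one_div_factorial :
    HasSum (fun k : ℕ => (k : ℝ) ^ (1 : ℝ) / k.factorial) (exp 1) := by
  have hshift (n : ℕ) :
      ((n + 1 : ℕ) : ℝ) ^ (1 : ℝ) / (n + 1).factorial = 1 ^ n / n.factorial := by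
    rw [rpow_one, one_pow, Nat.factorial_succ]
    push_cast
    field_simp
  refine (hasSum_nat_add_iff' 1).mp ?_
  rw [Finset.sum_range_one, Nat.cast_zero, zero_rpow one_ne_zero, zero_div, sub_zero,
    exp_eq_exp_ℝ]
  simpa only [hshift] using NormedSpace.expSeries_div_hasSum_exp (1 : ℝ)

theorem bellFun_one : bellFun 1 = 1 := by
  rw [bellFun, hasSum_rpow_one_div_factorial.tsum_eq]
  field_simp

theorem bellFun_pos (x : ℝ) : 0 < bellFun x := by
  refine mul_pos (by positivity) ?_
  exact (summable_rpow_div_factorial x).tsum_pos (fun k => by positivity) 1 (by simp)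

theorem bellFun_strictMonoOn : StrictMonoOn bellFun (Ioi 0) := by
  intro x hx y hy hxy
  refine mul_lt_mul_of_pos_left ?_ (by positivity)
  refine (summable_rpow_div_factorial x).tsum_lt_tsum (i := 2) (fun k => ?_) ?_
    (summable_rpow_div_factorial y)
  · refine div_le_div_of_nonneg_right ?_ k.factorial.cast_nonneg
    rcases k.eq_zero_or_pos with rfl | hk
    · simp [zero_rpow (ne_of_gt hx), zero_rpow (ne_of_gt hy)]
    · exact rpow_le_rpow_of_exponent_le (by exact_mod_cast hk) hxy.le
  · refine div_lt_div_of_pos_right ?_ (by positivity)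
    exact rpow_lt_rpow_of_exponent_lt (by norm_num) hxy

theorem rpow_add_div_factorial_eq_rpow_mul_rpow {x y a b : ℝ} (hx : 0 < x) (hy : 0 < y)
    (ha : 0 < a) (hb : 0 < b) (hab : a + b = 1) (k : ℕ) :
    (k : ℝ) ^ (a * x + b * y) / k.factorial =
      ((k : ℝ) ^ x / k.factorial) ^ a * ((k : ℝ) ^ y / k.factorial) ^ b := by
  rcases k.eq_zero_or_pos with rfl | hk
  · simp [zero_rpow, hx.ne', hy.ne', ha.ne', hb.ne', (by positivity : a * x + b * y ≠ 0)]
  have hk : (0 : ℝ) < k := by exact_mod_cast hk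
  have hfac : (0 : ℝ) < k.factorial := by positivity
  rw [div_rpow (by positivity) hfac.le, div_rpow (by positivity) hfac.le, div_mul_div_comm,
    ← rpow_mul hk.le, ← rpow_mul hk.le, ← rpow_add hk, ← rpow_add hfac, hab, rpow_one,
    mul_comm x, mul_comm y]

theorem bellFun_add_le_rpow_mul_rpow {x y a b : ℝ} (hx : 0 < x) (hy : 0 < y)
    (ha : 0 < a) (hb : 0 < b) (hab : a + b = 1) :
    bellFun (a * x + b * y) ≤ bellFun x ^ a * bellFun y ^ b := by
  have hexp : (1 / exp 1) ^ a * (1 / exp 1) ^ b = 1 / exp 1 := by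
    rw [← rpow_add (by positivity), hab, rpow_one]
  have hsum (z : ℝ) : 0 ≤ ∑' k : ℕ, (k : ℝ) ^ z / k.factorial :=
    tsum_nonneg fun k => by positivity
  rw [bellFun, bellFun, bellFun, mul_rpow (by positivity) (hsum x),
    mul_rpow (by positivity) (hsum y), mul_mul_mul_comm, hexp,
    tsum_congr (rpow_add_div_factorial_eq_rpow_mul_rpow hx hy ha hb hab)]
  gcongr
  exact tsum_rpow_mul_rpow_le_of_nonneg (fun k => by positivity) (fun k => by positivity)
    (summable_rpow_div_factorial x) (summable_rpow_div_factorial y) ha hb hab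

theorem convexOn_log_bellFun : ConvexOn ℝ (Ioi 0) fun x => log (bellFun x) := by
  refine convexOn_iff_forall_pos.2 ⟨convex_Ioi 0, fun x hx y hy a b ha hb hab => ?_⟩
  simp only [smul_eq_mul]
  rw [← log_rpow (bellFun_pos x), ← log_rpow (bellFun_pos y),
    ← log_mul (rpow_pos_of_pos (bellFun_pos x) a).ne' (rpow_pos_of_pos (bellFun_pos y) b).ne']
  exact log_le_log (bellFun_pos _) (bellFun_add_le_rpow_mul_rpow hx hy ha hb hab)

theorem ConvexOn.div_lt_div_of_nonpos_of_pos {f : ℝ → ℝ} {s : Set ℝ} {a x y : ℝ}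
    (hf : ConvexOn ℝ s f) (has : a ∈ s) (hys : y ∈ s) (ha : 0 < a) (hfa : f a ≤ 0)
    (hfy : 0 < f y) (hax : a ≤ x) (hxy : x < y) : f x / x < f y / y := by
  have hya : 0 < y - a := by linarith
  set θ := (x - a) / (y - a)
  have hθ : θ * (y - a) = x - a := div_mul_cancel₀ _ hya.ne'
  have hθ1 : θ < 1 := by rw [div_lt_one hya]; linarith
  have hconv : f ((1 - θ) • a + θ • y) ≤ (1 - θ) • f a + θ • f y :=
    hf.2 has hys (sub_nonneg.2 hθ1.le) (by positivity) (sub_add_cancel _ _)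
  have hcomb : (1 - θ) * a + θ * y = x := by linear_combination hθ
  simp only [smul_eq_mul, hcomb] at hconv
  have hfx : f x ≤ θ * f y := by
    linarith [mul_nonpos_of_nonneg_of_nonpos (sub_nonneg.2 hθ1.le) hfa]
  have hx : 0 < x := ha.trans_le hax
  have hθx : θ / x < 1 / y := by
    rw [div_lt_div_iff₀ hx (by linarith)]
    nlinarith
  calc f x / x ≤ θ * f y / x := by gcongr
    _ = θ / x * f y := by ring
    _ < 1 / y * f y := by gcongr
    _ = f y / y := by ring

/-- The function `x ↦ log B(x)^{1/x}` is strictly increasing for `x ≥ 1`: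
for `1 ≤ x < y`, `B(x)^{1/x} < B(y)^{1/y}`. -/
theorem bellFun_rpow_strictMonoOn (x y : ℝ) (hx : 1 ≤ x) (hxy : x < y) :
    bellFun x ^ (1 / x) < bellFun y ^ (1 / y) := by
  have hlog_y : 0 < log (bellFun y) :=
    log_pos <| bellFun_one ▸
      bellFun_strictMonoOn (mem_Ioi.2 one_pos) (mem_Ioi.2 (by linarith)) (by linarith)
  have key := convexOn_log_bellFun.div_lt_div_of_nonpos_of_pos (a := 1) (mem_Ioi.2 one_pos)
    (mem_Ioi.2 (by linarith)) one_pos (by simp [bellFun_one]) hlog_y hx hxy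
  rw [rpow_def_of_pos (bellFun_pos x), rpow_def_of_pos (bellFun_pos y), exp_lt_exp]
  simpa only [mul_one_div] using key
end

section
/- The sequence {B_n^{1/n}}_{n≥1} of n-th roots of the Bell numbers is strictly increasing: for every integer n ≥ 1, B_n^{1/n} < B_{n+1}^{1/(n+1)}. -/
/-!
Bell numbers count setoids, and splitting off the class of one extra point gives the recurrence
`B (n + 1) = ∑ i ≤ n, (n choose i) * B (n - i)` of Mathlib's `Nat.bell`. By Dobinski's formula
`e * B n = ∑ k, k ^ n / k!`, the Bell numbers are the moments of a positive measure on `ℕ`, hence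
log-convex by Cauchy–Schwarz. So the ratios `B (k + 1) / B k` are nondecreasing, and they start
with `1 < 2`. Writing `B n` as the product of the first `n` ratios gives
`B n < (B (n + 1) / B n) ^ n`, that is `B n ^ (n + 1) < B (n + 1) ^ n`.
-/

open Finset Nat

/-- The `n`-th Bell number: the number of partitions of an `n`-element set,
i.e. the number of equivalence relations (setoids) on a set of `n` elements. -/
noncomputable def bellNumber (n : ℕ) : ℕ := Nat.card (Setoid (Fin n))

def Equiv.setoidCongr {α β : Type*} (e : α ≃ β) : Setoid α ≃ Setoid β where
  toFun r := r.comap e.symm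
  invFun r := r.comap e
  left_inv r := Setoid.ext fun x y => by simp only [Setoid.comap_rel, Equiv.symm_apply_apply]
  right_inv r := Setoid.ext fun x y => by simp only [Setoid.comap_rel, Equiv.apply_symm_apply]

instance Setoid.finite {α : Type*} [Finite α] : Finite (Setoid α) :=
  Finite.of_injective (fun r : Setoid α => (r : α → α → Prop)) fun _ _ h =>
    Setoid.ext fun a b => iff_of_eq (congrFun₂ h a b)

namespace Setoid

variable {α : Type*} [Fintype α]

open Classical in
noncomputable def noneClass (r : Setoid (Option α)) : Finset α :=
  univ.filter fun a => r (some a) none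

theorem mem_noneClass {r : Setoid (Option α)} {a : α} : a ∈ noneClass r ↔ r (some a) none := by
  simp [noneClass]

variable [DecidableEq α]

/-- Its kernel is the setoid on `Option α` in which `none` is related exactly to `s`, and which
restricts to `q` off `s`. -/
def optionClassMap {s : Finset α} (q : Setoid {a // a ∉ s}) : Option α → Option (Quotient q)
  | none => none
  | some a => if h : a ∈ s then none else some ⟦⟨a, h⟩⟧

def noneClassFiberEquiv (s : Finset α) :
    {r : Setoid (Option α) // noneClass r = s} ≃ Setoid {a // a ∉ s} where
  toFun r := r.1.comap fun a => some a.1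
  invFun q := ⟨ker (optionClassMap q), by
    ext a
    by_cases ha : a ∈ s <;> simp [mem_noneClass, ker_def, optionClassMap, ha]⟩
  left_inv := by
    rintro ⟨r, rfl⟩
    ext x y
    rcases x with _ | a <;> rcases y with _ | b <;> simp only [ker_def, optionClassMap]
    · exact iff_of_true trivial (r.refl' none)
    · split_ifs with hb <;> rw [mem_noneClass] at hb
      · exact iff_of_true rfl (r.symm' hb)
      · exact iff_of_false id fun h => hb (r.symm' h)
    · split_ifs with ha <;> rw [mem_noneClass] at ha
      · exact iff_of_true rfl ha
      · exact iff_of_false id ha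
    · split_ifs with ha hb hb <;> rw [mem_noneClass] at ha hb
      · exact iff_of_true rfl (r.trans' ha (r.symm' hb))
      · exact iff_of_false (by simp) fun h => hb (r.trans' (r.symm' h) ha)
      · exact iff_of_false (by simp) fun h => ha (r.trans' h hb)
      · rw [Option.some_inj, Quotient.eq]
        rfl
  right_inv q := by
    ext ⟨a, ha⟩ ⟨b, hb⟩
    simp [ker_def, optionClassMap, ha, hb, Quotient.eq]

end Setoid

theorem Nat.card_setoid_option (α : Type*) [Fintype α] [DecidableEq α] :
    Nat.card (Setoid (Option α)) = ∑ s : Finset α, Nat.card (Setoid {a // a ∉ s}) := by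
  rw [← Nat.card_congr (Equiv.sigmaFiberEquiv (Setoid.noneClass (α := α))), Nat.card_sigma]
  exact Fintype.sum_congr _ _ fun s => Nat.card_congr (Setoid.noneClassFiberEquiv s)

theorem Nat.card_setoid_fin (n : ℕ) : Nat.card (Setoid (Fin n)) = n.bell := by
  induction n using Nat.strong_induction_on with
  | _ n ih =>
  cases n with
  | zero =>
    have : Subsingleton (Setoid (Fin 0)) := ⟨fun r s => Setoid.ext fun a => a.elim0⟩
    simp
  | succ m =>
    have hcompl (s : Finset (Fin m)) : Nat.card (Setoid {a // a ∉ s}) = (m - #s).bell := by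
      have e := Fintype.equivFinOfCardEq (show Fintype.card {a // a ∉ s} = m - #s by simp)
      rw [Nat.card_congr e.setoidCongr, ih _ (by omega)]
    rw [Nat.card_congr (finSuccEquiv m).setoidCongr, Nat.card_setoid_option,
      Fintype.sum_congr _ _ hcompl, ← powerset_univ,
      sum_powerset_apply_card (fun k => (m - k).bell), Nat.bell_succ, Finset.card_univ,
      Fintype.card_fin, Nat.range_succ_eq_Iic]
    simp only [smul_eq_mul]

theorem bellNumber_eq_bell (n : ℕ) : bellNumber n = n.bell :=
  Nat.card_setoid_fin n

theorem Nat.bell_pos (n : ℕ) : 0 < n.bell :=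
  Nat.card_setoid_fin n ▸ Nat.card_pos

theorem tsum_sq_le_tsum_mul_tsum_of_sq_le_mul {ι : Type*} {r f g : ι → ℝ}
    (hf : ∀ i, 0 ≤ f i) (hg : ∀ i, 0 ≤ g i) (h : ∀ i, r i ^ 2 ≤ f i * g i)
    (hr : Summable r) (hfs : Summable f) (hgs : Summable g) :
    (∑' i, r i) ^ 2 ≤ (∑' i, f i) * ∑' i, g i := by
  refine le_of_tendsto' (hr.hasSum.pow 2) fun s => ?_
  calc (∑ i ∈ s, r i) ^ 2 ≤ (∑ i ∈ s, f i) * ∑ i ∈ s, g i :=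
        sum_sq_le_sum_mul_sum_of_sq_le_mul s (fun i _ => hf i) (fun i _ => hg i) fun i _ => h i
    _ ≤ (∑' i, f i) * ∑' i, g i :=
        mul_le_mul (hfs.sum_le_tsum s fun i _ => hf i) (hgs.sum_le_tsum s fun i _ => hg i)
          (sum_nonneg fun i _ => hg i) (tsum_nonneg hf)

theorem summable_natCast_pow_div_factorial (n : ℕ) :
    Summable fun k : ℕ => (k : ℝ) ^ n / k ! := by
  refine ((Real.summable_pow_div_factorial (Real.exp 1)).mul_left (n ! : ℝ)).of_nonneg_of_le
    (fun k => by positivity) fun k => ?_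
  have hk : (k : ℝ) ^ n ≤ n ! * Real.exp 1 ^ k := by
    rw [← Real.exp_nat_mul, mul_one, ← div_le_iff₀' (by positivity)]
    exact Real.pow_div_factorial_le_exp _ k.cast_nonneg n
  rw [mul_div_assoc']
  gcongr

theorem tsum_natCast_pow_succ_div_factorial (n : ℕ) :
    ∑' k : ℕ, (k : ℝ) ^ (n + 1) / k ! =
      ∑ i ∈ Iic n, n.choose i * ∑' k : ℕ, (k : ℝ) ^ (n - i) / k ! := by
  have hshift (m : ℕ) : ((m + 1 : ℕ) : ℝ) ^ (n + 1) / (m + 1)! =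
      ∑ i ∈ Iic n, n.choose i * ((m : ℝ) ^ (n - i) / m !) := by
    -- cancel one factor `m + 1`, then expand `(1 + m) ^ n` binomially
    rw [factorial_succ, cast_mul, pow_succ, mul_comm ((m + 1 : ℕ) : ℝ) _,
      mul_div_mul_right _ _ (by positivity), cast_succ, add_comm, add_pow, sum_div,
      ← range_succ_eq_Iic]
    refine sum_congr rfl fun i _ => ?_
    ring
  rw [(summable_natCast_pow_div_factorial (n + 1)).tsum_eq_zero_add, tsum_congr hshift,
    Summable.tsum_finsetSum fun i _ => (summable_natCast_pow_div_factorial _).mul_left _]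
  simp [tsum_mul_left]

theorem Nat.exp_one_mul_bell (n : ℕ) : Real.exp 1 * n.bell = ∑' k : ℕ, (k : ℝ) ^ n / k ! := by
  induction n using Nat.strong_induction_on with
  | _ n ih =>
  cases n with
  | zero =>
    simpa [Real.exp_eq_exp_ℝ] using (NormedSpace.expSeries_div_hasSum_exp (1 : ℝ)).tsum_eq.symm
  | succ n =>
    rw [tsum_natCast_pow_succ_div_factorial, bell_succ, cast_sum, mul_sum]
    refine sum_congr rfl fun i hi => ?_
    rw [← ih _ (by grind)]
    push_cast
    ring

theorem Nat.bell_sq_le_mul (n : ℕ) : (n + 1).bell ^ 2 ≤ n.bell * (n + 2).bell := by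
  have hcs := tsum_sq_le_tsum_mul_tsum_of_sq_le_mul (fun k => by positivity)
    (fun k => by positivity) (fun k : ℕ => le_of_eq (by ring))
    (summable_natCast_pow_div_factorial (n + 1)) (summable_natCast_pow_div_factorial n)
    (summable_natCast_pow_div_factorial (n + 2))
  simp only [← exp_one_mul_bell] at hcs
  have h : Real.exp 1 ^ 2 * ((n + 1).bell : ℝ) ^ 2 ≤
      Real.exp 1 ^ 2 * (n.bell * (n + 2).bell) := by
    linear_combination hcs
  exact_mod_cast le_of_mul_le_mul_left h (by positivity)

section RatioSequence

variable {K : Type*} [Field K] [LinearOrder K] [IsStrictOrderedRing K] {a : ℕ → K}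

theorem monotone_div_succ_of_sq_le_mul (ha : ∀ n, 0 < a n)
    (h : ∀ n, a (n + 1) ^ 2 ≤ a n * a (n + 2)) : Monotone fun n => a (n + 1) / a n := by
  refine monotone_nat_of_le_succ fun n => ?_
  rw [div_le_div_iff₀ (ha n) (ha (n + 1))]
  nlinarith [h n]

theorem eq_mul_prod_range_div (ha : ∀ n, a n ≠ 0) (n : ℕ) :
    a n = a 0 * ∏ k ∈ range n, a (k + 1) / a k := by
  induction n with
  | zero => simp
  | succ n ih => rw [prod_range_succ, ← mul_assoc, ← ih, mul_div_cancel₀ _ (ha n)]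

theorem pow_succ_lt_mul_pow_of_monotone_div (ha : ∀ n, 0 < a n)
    (hmono : Monotone fun n => a (n + 1) / a n) {n : ℕ} (hlt : a 1 / a 0 < a (n + 1) / a n) :
    a n ^ (n + 1) < a 0 * a (n + 1) ^ n := by
  have hn : 0 < n := Nat.pos_of_ne_zero fun h => by subst h; exact lt_irrefl _ hlt
  have hbound : a n < a 0 * (a (n + 1) / a n) ^ n :=
    calc a n = a 0 * ∏ k ∈ range n, a (k + 1) / a k :=
          eq_mul_prod_range_div (fun k => (ha k).ne') n
      _ < a 0 * ∏ _k ∈ range n, a (n + 1) / a n := by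
          refine mul_lt_mul_of_pos_left (prod_lt_prod (fun k _ => div_pos (ha _) (ha k))
            (fun k hk => hmono (mem_range.1 hk).le) ⟨0, mem_range.2 hn, hlt⟩) (ha 0)
      _ = a 0 * (a (n + 1) / a n) ^ n := by rw [prod_const, card_range]
  calc a n ^ (n + 1) = a n * a n ^ n := pow_succ' _ _
    _ < a 0 * (a (n + 1) / a n) ^ n * a n ^ n :=
        mul_lt_mul_of_pos_right hbound (pow_pos (ha n) n)
    _ = a 0 * a (n + 1) ^ n := by rw [mul_assoc, ← mul_pow, div_mul_cancel₀ _ (ha n).ne']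

end RatioSequence

theorem Real.rpow_one_div_lt_rpow_one_div_of_pow_lt {x y : ℝ} {m n : ℕ} (hx : 0 ≤ x) (hy : 0 ≤ y)
    (hm : m ≠ 0) (hn : n ≠ 0) (h : x ^ n < y ^ m) : x ^ ((1 : ℝ) / m) < y ^ ((1 : ℝ) / n) := by
  have hmn : (0 : ℝ) < m * n := by positivity
  rw [← rpow_lt_rpow_iff (by positivity) (by positivity) hmn, ← rpow_mul hx, ← rpow_mul hy,
    show 1 / (m : ℝ) * (m * n) = n by field_simp, show 1 / (n : ℝ) * (m * n) = m by field_simp,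
    rpow_natCast, rpow_natCast]
  exact h

/-- The sequence `{B_n^{1/n}}_{n ≥ 1}` of `n`-th roots of the Bell numbers is
strictly increasing. -/
theorem bellNumber_nthRoot_strictMono (n : ℕ) (hn : 1 ≤ n) :
    (bellNumber n : ℝ) ^ ((1 : ℝ) / n) <
      (bellNumber (n + 1) : ℝ) ^ ((1 : ℝ) / (n + 1)) := by
  have hpos (k : ℕ) : 0 < (k.bell : ℝ) := by exact_mod_cast k.bell_pos
  have hmono := monotone_div_succ_of_sq_le_mul hpos fun k => by exact_mod_cast k.bell_sq_le_mul
  have hlt : (Nat.bell 1 : ℝ) / Nat.bell 0 < ((n + 1).bell : ℝ) / n.bell :=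
    calc (Nat.bell 1 : ℝ) / Nat.bell 0 < Nat.bell 2 / Nat.bell 1 := by norm_num
      _ ≤ ((n + 1).bell : ℝ) / n.bell := hmono hn
  have hpow := pow_succ_lt_mul_pow_of_monotone_div hpos hmono hlt
  rw [bell_zero, cast_one, one_mul] at hpow
  have hroot := Real.rpow_one_div_lt_rpow_one_div_of_pow_lt (hpos n).le (hpos (n + 1)).le
    (by omega) (succ_ne_zero n) hpow
  rw [bellNumber_eq_bell, bellNumber_eq_bell]
  exact_mod_cast hroot
end
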